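/- The fundamental theorem (soundness) for subStraTT holds: if ⟦Γ⟧ and σ ∈ ⟦Γ⟧ (σ is a semantically valid simultaneous substitution for Γ), and Γ ⊢ a :^k A, then ⟦A{σ}⟧_k holds and a{σ} ∈ ⟦A{σ}⟧_k. -/

import Mathlib

/-! subStraTT without global definitions, in de Bruijn representation:
a single universe ⋆ with type-in-type, stratified dependent function types
`Πx:^j A. B`, abstractions, applications, the empty type and its eliminator.
Levels are natural numbers. -/

inductive Tm : Type
  | star
  | var (x : ℕ)
  | pi (j : ℕ) (A B : Tm)
  | lam (b : Tm)
  | app (b a : Tm)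
  | bot
  | absurd (b : Tm)
  deriving DecidableEq

namespace Tm

/-- Shift free de Bruijn indices `≥ c` up by `d`. -/
def shift (d c : ℕ) : Tm → Tm
  | star => star
  | var x => if x < c then var x else var (x + d)
  | pi j A B => pi j (shift d c A) (shift d (c + 1) B)
  | lam b => lam (shift d (c + 1) b)
  | app b a => app (shift d c b) (shift d c a)
  | bot => bot
  | absurd b => absurd (shift d c b)

/-- Substitute `u` for de Bruijn index `k` (decrementing greater indices). -/
def subst (k : ℕ) (u : Tm) : Tm → Tm
  | star => star
  | var x => if x < k then var x else if x = k then shift k 0 u else var (x - 1)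
  | pi j A B => pi j (subst k u A) (subst (k + 1) u B)
  | lam b => lam (subst (k + 1) u b)
  | app b a => app (subst k u b) (subst k u a)
  | bot => bot
  | absurd b => absurd (subst k u b)

end Tm

/-- Parallel reduction `a ⇒ b`: all visible β-redexes may be reduced
simultaneously in one step. -/
inductive Par : Tm → Tm → Prop
  | star : Par .star .star
  | var (x) : Par (.var x) (.var x)
  | bot : Par .bot .bot
  | pi {j A A' B B'} : Par A A' → Par B B' → Par (.pi j A B) (.pi j A' B')
  | lam {b b'} : Par b b' → Par (.lam b) (.lam b')
  | app {b b' a a'} : Par b b' → Par a a' → Par (.app b a) (.app b' a')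
  | beta {b b' a a'} : Par b b' → Par a a' →
      Par (.app (.lam b) a) (Tm.subst 0 a' b')
  | absurd {b b'} : Par b b' → Par (.absurd b) (.absurd b')

/-- `a ⇒* b`: reflexive–transitive closure of parallel reduction. -/
def Pars : Tm → Tm → Prop := Relation.ReflTransGen Par

/-- Joinability `a ⇔ b`: `a` and `b` parallel-reduce to a common term. -/
def Conv (a b : Tm) : Prop := ∃ c, Pars a c ∧ Pars b c

/-- Untyped definitional equality `a ≡ b`: the least reflexive, symmetric,
transitive congruence containing β-equivalence. -/
inductive DEq : Tm → Tm → Prop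
  | refl (a) : DEq a a
  | sym : DEq a b → DEq b a
  | trans : DEq a b → DEq b c → DEq a c
  | beta (b a) : DEq (.app (.lam b) a) (Tm.subst 0 a b)
  | pi {j A A' B B'} : DEq A A' → DEq B B' → DEq (.pi j A B) (.pi j A' B')
  | lam {b b'} : DEq b b' → DEq (.lam b) (.lam b')
  | app {b b' a a'} : DEq b b' → DEq a a' → DEq (.app b a) (.app b' a')
  | absurd {b b'} : DEq b b' → DEq (.absurd b) (.absurd b')

/-! The logical relation, stratified by well-founded induction on levels:
an inductive predicate `⟦A⟧ₖ` on closed types (`U`), parametrized by the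
membership relation at strictly lower levels, together with a membership
relation `a ∈ ⟦A⟧ₖ` (`elU`) defined by recursion on the derivation of `⟦A⟧ₖ`;
the knot is tied by well-founded recursion on the level `k` (`el`). -/

/-- Inductive predicate on closed types at level `k`, with rules for `⋆`, `⊥`,
stratified dependent function types (domain at a strictly lower level `j < k`,
codomain interpreted at all members of the domain), and closure under parallel
reduction. `el` is the membership relation at strictly lower levels. -/
inductive U (el : ℕ → Tm → Tm → Prop) : ℕ → Tm → Type
  | star {k} : U el k .star
  | bot {k} : U el k .bot
  | pi {k j A B} : j < k → U el j A →
      (∀ y, el j A y → U el k (Tm.subst 0 y B)) → U el k (.pi j A B)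
  | red {k A B} : Par A B → U el k B → U el k A

/-- Membership `a ∈ ⟦A⟧ₖ`, by recursion on the derivation of `⟦A⟧ₖ`:
`A ∈ ⟦⋆⟧ₖ` iff `⟦A⟧ₖ`; `a ∈ ⟦⊥⟧ₖ` is false; `f ∈ ⟦Πx:^j A. B⟧ₖ` iff for all
`y ∈ ⟦A⟧ⱼ`, `f y ∈ ⟦B{y/x}⟧ₖ`; membership is preserved along reduction. -/
def elU {el : ℕ → Tm → Tm → Prop} {k : ℕ} : {A : Tm} → U el k A → Tm → Prop
  | _, .star, a => Nonempty (U el k a)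
  | _, .bot, _ => False
  | _, .pi _ _ hB, f => ∀ y hy, elU (hB y hy) (Tm.app f y)
  | _, .red _ h, a => elU h a

/-- The membership relation `a ∈ ⟦A⟧ₖ`, tying the knot by well-founded
recursion on the level `k`. -/
def el (k : ℕ) (A a : Tm) : Prop :=
  ∃ h : U (fun j B b => if h' : j < k then el j B b else False) k A, elU h a
termination_by k
decreasing_by all_goals exact h'

/-- Membership at strictly lower levels than `k`. -/
def lowEl (k : ℕ) : ℕ → Tm → Tm → Prop :=
  fun j B b => if h' : j < k then el j B b else False

/-- The type interpretation `⟦A⟧ₖ` is defined (inhabited). -/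
def interpTy (k : ℕ) (A : Tm) : Prop :=
  Nonempty (U (lowEl k) k A)

/-- A context entry `x :^k A` (level, type); index 0 is the most recent. -/
abbrev Ctx := List (ℕ × Tm)

mutual
  /-- Well-formed contexts. -/
  inductive CtxWf : Ctx → Prop
    | nil : CtxWf []
    | cons {Γ k A} : CtxWf Γ → Typing Γ A k .star → CtxWf ((k, A) :: Γ)

  /-- Level-annotated typing `Γ ⊢ a :^k A` of subStraTT without global
  definitions: type-in-type, stratified dependent functions (domain at a
  strictly lower level, applications at the domain level), the empty type,
  variable subsumption, and conversion. -/
  inductive Typing : Ctx → Tm → ℕ → Tm → Prop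
    | star {Γ k} : CtxWf Γ → Typing Γ .star k .star
    | var {Γ x j k A} : CtxWf Γ → Γ[x]? = some (j, A) → j ≤ k →
        Typing Γ (.var x) k (Tm.shift (x + 1) 0 A)
    | pi {Γ j k A B} : j < k → Typing Γ A j .star →
        Typing ((j, A) :: Γ) B k .star → Typing Γ (.pi j A B) k .star
    | lam {Γ j k A B b} : j < k → Typing Γ A j .star →
        Typing ((j, A) :: Γ) b k B → Typing Γ (.lam b) k (.pi j A B)
    | app {Γ j k A B b a} : Typing Γ b k (.pi j A B) → Typing Γ a j A →
        Typing Γ (.app b a) k (Tm.subst 0 a B)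
    | bot {Γ k} : CtxWf Γ → Typing Γ .bot k .star
    | absurd {Γ k b A} : Typing Γ b k .bot → Typing Γ A k .star →
        Typing Γ (.absurd b) k A
    | conv {Γ k a A B} : Typing Γ a k A → DEq A B → Typing Γ B k .star →
        Typing Γ a k B
end

/-- The tail of a simultaneous substitution. -/
def tl (σ : ℕ → Tm) : ℕ → Tm := fun n => σ (n + 1)

/-- Lifting a simultaneous substitution under a binder. -/
def up (σ : ℕ → Tm) : ℕ → Tm
  | 0 => .var 0
  | n + 1 => Tm.shift 1 0 (σ n)

/-- Applying a simultaneous substitution `a{σ}`. -/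
def applySubst (σ : ℕ → Tm) : Tm → Tm
  | .star => .star
  | .var x => σ x
  | .pi j A B => .pi j (applySubst σ A) (applySubst (up σ) B)
  | .lam b => .lam (applySubst (up σ) b)
  | .app b a => .app (applySubst σ b) (applySubst σ a)
  | .bot => .bot
  | .absurd b => .absurd (applySubst σ b)

/-- `σ ∈ ⟦Γ⟧`: the substitution `σ` is semantically valid for `Γ`:
`σ ∈ ⟦∅⟧` always, and `σ ∈ ⟦Γ, x :^k A⟧` iff (the tail of) `σ ∈ ⟦Γ⟧` and
`σ[x] ∈ ⟦A{σ}⟧ₖ`. -/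
def substInterp : Ctx → (ℕ → Tm) → Prop
  | [], _ => True
  | (k, A) :: Γ, σ => substInterp Γ (tl σ) ∧ el k (applySubst (tl σ) A) (σ 0)

/-- `⟦Γ⟧`: semantic well-formedness of a context: `⟦∅⟧` holds, and
`⟦Γ, x :^k A⟧` holds iff `⟦Γ⟧` holds and `⟦A{σ}⟧ₖ` holds for all `σ ∈ ⟦Γ⟧`. -/
def ctxInterp : Ctx → Prop
  | [] => True
  | (k, A) :: Γ => ctxInterp Γ ∧ ∀ σ, substInterp Γ σ → interpTy k (applySubst σ A)

/-! Each typing rule is valid for the semantic judgement "`a{σ} ∈ ⟦A{σ}⟧ₖ` for every `σ ∈ ⟦Γ⟧`",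
and soundness follows by induction on the derivation; `⟦A{σ}⟧ₖ` comes for free, since a
membership proof contains a derivation of `⟦A{σ}⟧ₖ`.

The interpretation is closed backwards under parallel reduction by construction. The real work
is to show that membership in `⟦A⟧ⱼ` depends on `A` only up to conversion and survives raising
the level. This goes by strong induction on the target level and then induction on the
derivation of `⟦A⟧ⱼ`. A derivation of a type convertible to a Π-type is, once its reduction
steps are peeled off, a Π-derivation with convertible domain and codomain. Its domain lives at a
strictly lower level, where the outer induction hypothesis transports arguments back. Confluence
of parallel reduction (via Takahashi's complete development) makes conversion an equivalence,
keeps `⋆`, `⊥` and Π apart, and contains the untyped equality `≡` of the conversion rule. -/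

namespace Tm

theorem shift_zero : ∀ (t : Tm) (c : ℕ), shift 0 c t = t
  | star, _ | bot, _ => rfl
  | var x, c => by simp [shift]
  | pi j A B, c => by simp [shift, shift_zero A, shift_zero B]
  | lam b, c => by simp [shift, shift_zero b]
  | app b a, c => by simp [shift, shift_zero b, shift_zero a]
  | absurd b, c => by simp [shift, shift_zero b]

theorem shift_shift : ∀ (t : Tm) {d d' c c' : ℕ}, c ≤ c' → c' ≤ c + d →
    shift d' c' (shift d c t) = shift (d + d') c t
  | star, _, _, _, _, _, _ | bot, _, _, _, _, _, _ => rfl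
  | var x, d, d', c, c', h1, h2 => by
      simp only [shift]; split <;> simp only [shift] <;> split <;>
        simp only [var.injEq] <;> omega
  | pi j A B, d, d', c, c', h1, h2 => by
      simp only [shift, shift_shift A h1 h2, shift_shift B (by omega : c + 1 ≤ c' + 1)
        (by omega : c' + 1 ≤ c + 1 + d)]
  | lam b, d, d', c, c', h1, h2 => by
      simp only [shift, shift_shift b (by omega : c + 1 ≤ c' + 1) (by omega : c' + 1 ≤ c + 1 + d)]
  | app b a, d, d', c, c', h1, h2 => by
      simp only [shift, shift_shift b h1 h2, shift_shift a h1 h2]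
  | absurd b, d, d', c, c', h1, h2 => by
      simp only [shift, shift_shift b h1 h2]

theorem subst_shift_cancel : ∀ (t : Tm) {d c n : ℕ} (u : Tm), c ≤ n → n < c + d →
    subst n u (shift d c t) = shift (d - 1) c t
  | star, _, _, _, _, _, _ | bot, _, _, _, _, _, _ => rfl
  | var x, d, c, n, u, h1, h2 => by
      simp only [shift]; split <;> simp only [subst] <;> split <;> try split
      all_goals first | (exfalso; omega) | (simp only [var.injEq] <;> omega)
  | pi j A B, d, c, n, u, h1, h2 => by
      simp only [shift, subst, subst_shift_cancel A u h1 h2,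
        subst_shift_cancel B u (by omega : c + 1 ≤ n + 1) (by omega : n + 1 < c + 1 + d)]
  | lam b, d, c, n, u, h1, h2 => by
      simp only [shift, subst,
        subst_shift_cancel b u (by omega : c + 1 ≤ n + 1) (by omega : n + 1 < c + 1 + d)]
  | app b a, d, c, n, u, h1, h2 => by
      simp only [shift, subst, subst_shift_cancel b u h1 h2, subst_shift_cancel a u h1 h2]
  | absurd b, d, c, n, u, h1, h2 => by
      simp only [shift, subst, subst_shift_cancel b u h1 h2]

theorem shift_shift_comm : ∀ (t : Tm) {d₁ d₂ c₁ c₂ : ℕ}, c₂ ≤ c₁ →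
    shift d₁ (c₁ + d₂) (shift d₂ c₂ t) = shift d₂ c₂ (shift d₁ c₁ t)
  | star, _, _, _, _, _ | bot, _, _, _, _, _ => rfl
  | var x, d₁, d₂, c₁, c₂, h => by
      iterate 5 (all_goals (try simp only [shift]); all_goals (repeat' split))
      all_goals first | (exfalso; omega) | (simp only [var.injEq]; omega)
  | pi j A B, d₁, d₂, c₁, c₂, h => by
      simp only [shift, shift_shift_comm A h]
      rw [show c₁ + d₂ + 1 = c₁ + 1 + d₂ by omega, shift_shift_comm B (by omega : c₂ + 1 ≤ c₁ + 1)]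
  | lam b, d₁, d₂, c₁, c₂, h => by
      simp only [shift]
      rw [show c₁ + d₂ + 1 = c₁ + 1 + d₂ by omega, shift_shift_comm b (by omega : c₂ + 1 ≤ c₁ + 1)]
  | app b a, d₁, d₂, c₁, c₂, h => by
      simp only [shift, shift_shift_comm b h, shift_shift_comm a h]
  | absurd b, d₁, d₂, c₁, c₂, h => by
      simp only [shift, shift_shift_comm b h]

theorem shift_subst : ∀ (t : Tm) {d c n : ℕ} (u : Tm), n ≤ c →
    shift d c (subst n u t) = subst n (shift d (c - n) u) (shift d (c + 1) t)
  | star, _, _, _, _, _ | bot, _, _, _, _, _ => rfl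
  | var x, d, c, n, u, h => by
      have hu : shift d c (shift n 0 u) = shift n 0 (shift d (c - n) u) := by
        simpa [Nat.sub_add_cancel h] using shift_shift_comm u (d₁ := d) (d₂ := n) (c₁ := c - n) (c₂ := 0) (Nat.zero_le _)
      iterate 5 (all_goals (try simp only [shift, subst]); all_goals (repeat' split))
      all_goals first
        | (exfalso; omega) | (simp only [var.injEq] <;> omega) | exact hu
  | pi j A B, d, c, n, u, h => by
      simp only [shift, subst, shift_subst A u h]
      rw [shift_subst B u (by omega : n + 1 ≤ c + 1), show c + 1 - (n + 1) = c - n by omega]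
  | lam b, d, c, n, u, h => by
      simp only [shift, subst]
      rw [shift_subst b u (by omega : n + 1 ≤ c + 1), show c + 1 - (n + 1) = c - n by omega]
  | app b a, d, c, n, u, h => by
      simp only [shift, subst, shift_subst b u h, shift_subst a u h]
  | absurd b, d, c, n, u, h => by
      simp only [shift, subst, shift_subst b u h]

theorem subst_add_shift : ∀ (t : Tm) {n c k : ℕ} (u : Tm), c ≤ k →
    subst (k + n) u (shift n c t) = shift n c (subst k u t)
  | star, _, _, _, _, _ | bot, _, _, _, _, _ => rfl
  | var x, n, c, k, u, h => by
      iterate 5 (all_goals (try simp only [shift, subst]); all_goals (repeat' split))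
      all_goals first
        | (exfalso; omega)
        | (simp only [var.injEq] <;> omega)
        | exact (shift_shift u (Nat.zero_le c) (by omega)).symm
  | pi j A B, n, c, k, u, h => by
      simp only [shift, subst, subst_add_shift A u h]
      rw [show k + n + 1 = k + 1 + n by omega, subst_add_shift B u (by omega : c + 1 ≤ k + 1)]
  | lam b, n, c, k, u, h => by
      simp only [shift, subst]
      rw [show k + n + 1 = k + 1 + n by omega, subst_add_shift b u (by omega : c + 1 ≤ k + 1)]
  | app b a, n, c, k, u, h => by
      simp only [shift, subst, subst_add_shift b u h, subst_add_shift a u h]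
  | absurd b, n, c, k, u, h => by
      simp only [shift, subst, subst_add_shift b u h]

theorem subst_subst : ∀ (t : Tm) {n k : ℕ} (u v : Tm), n ≤ k →
    subst k u (subst n v t) = subst n (subst (k - n) u v) (subst (k + 1) u t)
  | star, _, _, _, _, _ | bot, _, _, _, _, _ => rfl
  | var x, n, k, u, v, h => by
      have hv : subst k u (shift n 0 v) = shift n 0 (subst (k - n) u v) := by
        simpa [Nat.sub_add_cancel h] using subst_add_shift v (n := n) u (Nat.zero_le (k - n))
      have hu : ∀ w, subst n w (shift (k + 1) 0 u) = shift k 0 u := fun w => by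
        simpa using subst_shift_cancel u w (Nat.zero_le n) (by omega : n < 0 + (k + 1))
      iterate 5 (all_goals (try simp only [subst]); all_goals (repeat' split))
      all_goals first
        | (exfalso; omega)
        | exact subst_shift_cancel u _ (Nat.zero_le n) (by omega)
        | exact (subst_shift_cancel u _ (Nat.zero_le n) (by omega)).symm
        | exact hv | exact hv.symm | exact (hu _).symm
  | pi j A B, n, k, u, v, h => by
      simp only [subst, subst_subst A u v h]
      rw [subst_subst B u v (by omega : n + 1 ≤ k + 1), show k + 1 - (n + 1) = k - n by omega]
  | lam b, n, k, u, v, h => by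
      simp only [subst]
      rw [subst_subst b u v (by omega : n + 1 ≤ k + 1), show k + 1 - (n + 1) = k - n by omega]
  | app b a, n, k, u, v, h => by
      simp only [subst, subst_subst b u v h, subst_subst a u v h]
  | absurd b, n, k, u, v, h => by
      simp only [subst, subst_subst b u v h]

end Tm

theorem Par.refl : ∀ a, Par a a
  | .star => .star
  | .var x => .var x
  | .pi _ A B => .pi (Par.refl A) (Par.refl B)
  | .lam b => .lam (Par.refl b)
  | .app b a => .app (Par.refl b) (Par.refl a)
  | .bot => .bot
  | .absurd b => .absurd (Par.refl b)

theorem Par.shift {a b : Tm} (h : Par a b) : ∀ d c, Par (Tm.shift d c a) (Tm.shift d c b) := by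
  induction h with
  | star | var | bot => exact fun d c => Par.refl _
  | pi _ _ ihA ihB => exact fun d c => .pi (ihA d c) (ihB d (c + 1))
  | lam _ ih => exact fun d c => .lam (ih d (c + 1))
  | app _ _ ihb iha => exact fun d c => .app (ihb d c) (iha d c)
  | absurd _ ih => exact fun d c => .absurd (ih d c)
  | @beta b b' a a' _ _ ihb iha =>
      intro d c
      rw [Tm.shift_subst b' a' (Nat.zero_le c), Nat.sub_zero]
      exact .beta (ihb d (c + 1)) (iha d c)

theorem Par.subst {a a' : Tm} (h : Par a a') :
    ∀ (k : ℕ) {b b' : Tm}, Par b b' → Par (Tm.subst k b a) (Tm.subst k b' a') := by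
  induction h with
  | star => exact fun _ _ _ _ => .star
  | bot => exact fun _ _ _ _ => .bot
  | var x =>
      intro k b b' hb
      simp only [Tm.subst]
      split
      · exact Par.refl _
      · split
        · exact hb.shift k 0
        · exact Par.refl _
  | pi _ _ ihA ihB => exact fun k _ _ hb => .pi (ihA k hb) (ihB (k + 1) hb)
  | lam _ ih => exact fun k _ _ hb => .lam (ih (k + 1) hb)
  | app _ _ ihb iha => exact fun k _ _ hb => .app (ihb k hb) (iha k hb)
  | absurd _ ih => exact fun k _ _ hb => .absurd (ih k hb)
  | @beta t t' s s' _ _ iht ihs =>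
      intro k b b' hb
      rw [Tm.subst_subst t' b' s' (Nat.zero_le k), Nat.sub_zero]
      exact .beta (iht (k + 1) hb) (ihs k hb)

def develop : Tm → Tm
  | .star => .star
  | .var x => .var x
  | .pi j A B => .pi j (develop A) (develop B)
  | .lam b => .lam (develop b)
  | .app (.lam b) a => Tm.subst 0 (develop a) (develop b)
  | .app b a => .app (develop b) (develop a)
  | .bot => .bot
  | .absurd b => .absurd (develop b)

theorem Par.lam_inv {b c : Tm} (h : Par (.lam b) c) : ∃ b', c = .lam b' ∧ Par b b' := by
  cases h with
  | lam hb => exact ⟨_, rfl, hb⟩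

theorem Par.triangle {a b : Tm} (h : Par a b) : Par b (develop a) := by
  induction h with
  | star => exact .star
  | var x => exact .var x
  | bot => exact .bot
  | pi _ _ ihA ihB => exact .pi ihA ihB
  | lam _ ih => exact .lam ih
  | absurd _ ih => exact .absurd ih
  | beta _ _ iht ihs => exact iht.subst 0 ihs
  | @app f f' s s' hf hs ihf ihs =>
      cases f with
      | lam t =>
          obtain ⟨t', rfl, -⟩ := hf.lam_inv
          obtain ⟨t'', he, ht''⟩ := ihf.lam_inv
          cases he
          exact .beta ht'' ihs
      | star | var | pi | app | bot | absurd => exact .app ihf ihs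

theorem Par.diamond {a b c : Tm} (h₁ : Par a b) (h₂ : Par a c) : ∃ d, Par b d ∧ Par c d :=
  ⟨develop a, h₁.triangle, h₂.triangle⟩

theorem conv_equivalence : Equivalence Conv :=
  Relation.equivalence_join_reflTransGen fun _ _ _ h₁ h₂ =>
    let ⟨d, hb, hc⟩ := h₁.diamond h₂
    ⟨d, .single hb, .single hc⟩

theorem Conv.refl (a : Tm) : Conv a a := conv_equivalence.refl a

theorem Conv.symm {a b : Tm} : Conv a b → Conv b a := conv_equivalence.symm

theorem Conv.trans {a b c : Tm} : Conv a b → Conv b c → Conv a c := conv_equivalence.trans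

theorem Par.conv {a b : Tm} (p : Par a b) : Conv a b := ⟨b, .single p, .refl⟩

theorem Conv.map {f : Tm → Tm} (hf : ∀ {x y}, Par x y → Par (f x) (f y)) {a b : Tm}
    (h : Conv a b) : Conv (f a) (f b) :=
  let ⟨c, hac, hbc⟩ := h
  ⟨f c, hac.lift f fun _ _ => hf, hbc.lift f fun _ _ => hf⟩

theorem Conv.map₂ {f : Tm → Tm → Tm}
    (hf : ∀ {x x' y y'}, Par x x' → Par y y' → Par (f x y) (f x' y')) {a a' b b' : Tm}
    (ha : Conv a a') (hb : Conv b b') : Conv (f a b) (f a' b') :=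
  (ha.map (f := (f · b)) (hf · (Par.refl b))).trans (hb.map (hf (Par.refl a')))

theorem Conv.subst {B B' : Tm} (y : Tm) (h : Conv B B') :
    Conv (Tm.subst 0 y B) (Tm.subst 0 y B') :=
  h.map (·.subst 0 (Par.refl y))

theorem DEq.conv {a b : Tm} (h : DEq a b) : Conv a b := by
  induction h with
  | refl a => exact Conv.refl a
  | sym _ ih => exact ih.symm
  | trans _ _ ih₁ ih₂ => exact ih₁.trans ih₂
  | beta b a => exact (Par.beta (Par.refl b) (Par.refl a)).conv
  | pi _ _ ihA ihB => exact ihA.map₂ Par.pi ihB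
  | lam _ ih => exact ih.map Par.lam
  | app _ _ ihb iha => exact ihb.map₂ Par.app iha
  | absurd _ ih => exact ih.map Par.absurd

theorem pars_star_inv {c : Tm} (h : Pars .star c) : c = .star := by
  induction h with
  | refl => rfl
  | tail _ hstep ih => subst ih; cases hstep; rfl

theorem pars_bot_inv {c : Tm} (h : Pars .bot c) : c = .bot := by
  induction h with
  | refl => rfl
  | tail _ hstep ih => subst ih; cases hstep; rfl

theorem pars_pi_inv {j : ℕ} {A B c : Tm} (h : Pars (.pi j A B) c) :
    ∃ A' B', c = .pi j A' B' ∧ Pars A A' ∧ Pars B B' := by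
  induction h with
  | refl => exact ⟨A, B, rfl, .refl, .refl⟩
  | tail _ hstep ih =>
      obtain ⟨A', B', rfl, hA, hB⟩ := ih
      cases hstep with
      | pi hA' hB' => exact ⟨_, _, rfl, hA.tail hA', hB.tail hB'⟩

theorem not_conv_star_bot : ¬ Conv .star .bot := fun ⟨_, h₁, h₂⟩ => by
  cases (pars_star_inv h₁).symm.trans (pars_bot_inv h₂)

theorem not_conv_star_pi {j : ℕ} {A B : Tm} : ¬ Conv .star (.pi j A B) := fun ⟨_, h₁, h₂⟩ => by
  obtain ⟨_, _, he, -, -⟩ := pars_pi_inv h₂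
  cases (pars_star_inv h₁).symm.trans he

theorem not_conv_bot_pi {j : ℕ} {A B : Tm} : ¬ Conv .bot (.pi j A B) := fun ⟨_, h₁, h₂⟩ => by
  obtain ⟨_, _, he, -, -⟩ := pars_pi_inv h₂
  cases (pars_bot_inv h₁).symm.trans he

theorem conv_pi_inv {j j' : ℕ} {A B A' B' : Tm} (h : Conv (.pi j A B) (.pi j' A' B')) :
    j = j' ∧ Conv A A' ∧ Conv B B' := by
  obtain ⟨c, h₁, h₂⟩ := h
  obtain ⟨A₁, B₁, rfl, hA₁, hB₁⟩ := pars_pi_inv h₁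
  obtain ⟨A₂, B₂, he, hA₂, hB₂⟩ := pars_pi_inv h₂
  cases he
  exact ⟨rfl, ⟨_, hA₁, hA₂⟩, ⟨_, hB₁, hB₂⟩⟩

theorem el_iff {k : ℕ} {A a : Tm} : el k A a ↔ ∃ h : U (lowEl k) k A, elU h a := by
  rw [el]; rfl

theorem lowEl_iff_of_lt {j k : ℕ} {B b : Tm} (h : j < k) : lowEl k j B b ↔ el j B b := by
  rw [lowEl, dif_pos h]

theorem lowEl_iff_lowEl {i j k : ℕ} {B b : Tm} (hij : i < j) (hjk : j ≤ k) :
    lowEl j i B b ↔ lowEl k i B b := by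
  rw [lowEl_iff_of_lt hij, lowEl_iff_of_lt (hij.trans_le hjk)]

theorem interpTy_of_el {k : ℕ} {A a : Tm} (h : el k A a) : interpTy k A :=
  let ⟨u, _⟩ := el_iff.1 h
  ⟨u⟩

theorem el_of_par {k : ℕ} {A B a : Tm} (p : Par A B) (h : el k B a) : el k A a :=
  let ⟨u, m⟩ := el_iff.1 h
  el_iff.2 ⟨.red p u, m⟩

theorem lowEl_of_par {k j : ℕ} {B B' b : Tm} (p : Par B B') (h : lowEl k j B' b) :
    lowEl k j B b := by
  by_cases hj : j < k
  · exact (lowEl_iff_of_lt hj).2 (el_of_par p ((lowEl_iff_of_lt hj).1 h))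
  · rw [lowEl, dif_neg hj] at h
    exact h.elim

namespace U

variable {e : ℕ → Tm → Tm → Prop}

theorem congr_param {e' : ℕ → Tm → Tm → Prop} {k : ℕ} {A : Tm} (h : U e k A)
    (he : ∀ j B b, j < k → (e j B b ↔ e' j B b)) : Nonempty (U e' k A) := by
  induction h with
  | star => exact ⟨.star⟩
  | bot => exact ⟨.bot⟩
  | pi hj _ _ ihA ihB =>
      obtain ⟨hA'⟩ := ihA fun i B b hi => he i B b (hi.trans hj)
      exact ⟨.pi hj hA' fun y hy => (ihB y ((he _ _ y hj).2 hy) he).some⟩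
  | red p _ ih => exact ⟨.red p (ih he).some⟩

theorem lift {j k : ℕ} {A : Tm} (h : U e j A) (hjk : j ≤ k) : Nonempty (U e k A) := by
  induction h generalizing k with
  | star => exact ⟨.star⟩
  | bot => exact ⟨.bot⟩
  | pi hj hA _ _ ihB => exact ⟨.pi (hj.trans_le hjk) hA fun y hy => (ihB y hy hjk).some⟩
  | red p _ ih => exact ⟨.red p (ih hjk).some⟩

theorem cumul {m j k : ℕ} {A : Tm} (h : U (lowEl j) m A) (hmj : m ≤ j) (hjk : j ≤ k) :
    Nonempty (U (lowEl k) k A) :=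
  let ⟨h'⟩ := h.congr_param fun _ _ _ hi => lowEl_iff_lowEl (hi.trans_le hmj) hjk
  h'.lift (hmj.trans hjk)

theorem of_par (he : ∀ j B B' b, Par B B' → e j B' b → e j B b) {k : ℕ} {A A' : Tm}
    (h : U e k A) (p : Par A A') : Nonempty (U e k A') := by
  induction h generalizing A' with
  | star => cases p; exact ⟨.star⟩
  | bot => cases p; exact ⟨.bot⟩
  | pi hj _ _ ihA ihB =>
      cases p with
      | pi pA pB =>
          exact ⟨.pi hj (ihA pA).some fun y hy =>
            (ihB y (he _ _ _ _ pA hy) (pB.subst 0 (Par.refl y))).some⟩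
  | red p' _ ih =>
      obtain ⟨d, hd, hd'⟩ := p'.diamond p
      exact ⟨.red hd' (ih hd).some⟩

theorem of_pars (he : ∀ j B B' b, Par B B' → e j B' b → e j B b) {k : ℕ} {A A' : Tm}
    (h : U e k A) (p : Pars A A') : Nonempty (U e k A') := by
  induction p with
  | refl => exact ⟨h⟩
  | tail _ hstep ih => exact ih.some.of_par he hstep

theorem of_pars_rev {k : ℕ} {A A' : Tm} (h : U e k A') (p : Pars A A') : Nonempty (U e k A) := by
  induction p using Relation.ReflTransGen.head_induction_on with
  | refl => exact ⟨h⟩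
  | head hstep _ ih => exact ⟨.red hstep ih.some⟩

theorem of_conv (he : ∀ j B B' b, Par B B' → e j B' b → e j B b) {k : ℕ} {A A' : Tm}
    (h : U e k A) (hc : Conv A A') : Nonempty (U e k A') :=
  let ⟨_, hA, hA'⟩ := hc
  (h.of_pars he hA).some.of_pars_rev hA'

theorem elU_of_par {k : ℕ} {A : Tm} (h : U e k A) {a a' : Tm} (p : Par a a') (m : elU h a') :
    elU h a := by
  induction h generalizing a a' with
  | star => exact ⟨.red p m.some⟩
  | bot => exact m
  | pi _ _ _ _ ihB => exact fun y hy => ihB y hy (.app p (Par.refl y)) (m y hy)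
  | red _ _ ih => exact ih p m

theorem elU_iff_of_conv_star {k : ℕ} {A : Tm} (h : U e k A) (hc : Conv .star A) {a : Tm} :
    elU h a ↔ Nonempty (U e k a) := by
  induction h with
  | star => exact Iff.rfl
  | bot => exact absurd hc not_conv_star_bot
  | pi => exact absurd hc not_conv_star_pi
  | red p _ ih => exact ih (hc.trans p.conv)

theorem exists_pi_of_conv {k j : ℕ} {A B A' : Tm} (h : U e k A') (hc : Conv (.pi j A B) A') :
    ∃ (A₂ B₂ : Tm) (hj : j < k) (hA : U e j A₂) (hB : ∀ y, e j A₂ y → U e k (Tm.subst 0 y B₂)),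
      Conv A A₂ ∧ Conv B B₂ ∧ ∀ a, elU h a ↔ elU (.pi hj hA hB) a := by
  induction h with
  | star => exact absurd hc.symm not_conv_star_pi
  | bot => exact absurd hc.symm not_conv_bot_pi
  | pi hj hA hB =>
      obtain ⟨rfl, hcA, hcB⟩ := conv_pi_inv hc
      exact ⟨_, _, hj, hA, hB, hcA, hcB, fun _ => Iff.rfl⟩
  | red p _ ih => exact ih (hc.trans p.conv)

end U

theorem el_conv_of_transport {k : ℕ}
    (H : ∀ {A A' a} (h : U (lowEl k) k A), Conv A A' → ∀ h' : U (lowEl k) k A', elU h a → elU h' a)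
    {A A' a : Tm} (hc : Conv A A') (ha : el k A a) : el k A' a := by
  obtain ⟨u, m⟩ := el_iff.1 ha
  obtain ⟨u'⟩ := u.of_conv (e := lowEl k) (fun _ _ _ _ => lowEl_of_par) hc
  exact el_iff.2 ⟨u', H u hc u' m⟩

theorem elU_transport (K : ℕ) : ∀ {j m : ℕ} {A : Tm} (h : U (lowEl j) m A), m ≤ j → j ≤ K →
    ∀ {A' a : Tm}, Conv A A' → ∀ h' : U (lowEl K) K A', elU h a → elU h' a := by
  induction K using Nat.strong_induction_on with
  | _ K IH =>
  intro j m A h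
  induction h with
  | star =>
      intro hmj hjK A' a hc h' ha
      exact (h'.elU_iff_of_conv_star hc).2 (ha.some.cumul hmj hjK)
  | bot => intro _ _ _ _ _ _ ha; exact ha.elim
  | red p _ ih =>
      intro hmj hjK _ _ hc
      exact ih hmj hjK (p.conv.symm.trans hc)
  | @pi m i A₀ B₀ hi _ _ _ ihB =>
      intro hmj hjK A' a hc h' ha
      obtain ⟨A₂, B₂, hiK, _, hB₂, hcA, hcB, hiff⟩ := h'.exists_pi_of_conv hc
      refine (hiff a).2 fun y hy₂ => ?_
      have hy : el i A₀ y :=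
        el_conv_of_transport (fun h hc h' => IH i hiK h le_rfl le_rfl hc h') hcA.symm
          ((lowEl_iff_of_lt hiK).1 hy₂)
      have hy₀ : lowEl j i A₀ y := (lowEl_iff_of_lt (hi.trans_le hmj)).2 hy
      exact ihB y hy₀ hmj hjK (hcB.subst y) (hB₂ y hy₂) (ha y hy₀)

theorem el_conv {k : ℕ} {A A' a : Tm} (hc : Conv A A') (ha : el k A a) : el k A' a :=
  el_conv_of_transport (fun h hc h' => elU_transport k h le_rfl le_rfl hc h') hc ha

theorem el_mono {j k : ℕ} {A a : Tm} (hjk : j ≤ k) (ha : el j A a) : el k A a :=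
  let ⟨u, m⟩ := el_iff.1 ha
  let ⟨u'⟩ := u.cumul le_rfl hjk
  el_iff.2 ⟨u', elU_transport k u le_rfl hjk (Conv.refl A) u' m⟩

theorem el_star_iff {k : ℕ} {T : Tm} : el k .star T ↔ interpTy k T :=
  ⟨fun h => let ⟨u, m⟩ := el_iff.1 h; (u.elU_iff_of_conv_star (Conv.refl _)).1 m,
    fun h => el_iff.2 ⟨.star, h⟩⟩

theorem not_el_bot {k : ℕ} {a : Tm} : ¬ el k .bot a := fun h =>
  let ⟨u, m⟩ := el_iff.1 h
  elU_transport k u le_rfl le_rfl (Conv.refl _) .bot m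

theorem el_app {k j : ℕ} {A B f y : Tm} (hf : el k (.pi j A B) f) (hy : el j A y) :
    el k (Tm.subst 0 y B) (.app f y) := by
  obtain ⟨u, m⟩ := el_iff.1 hf
  obtain ⟨A₂, B₂, hj, _, hB₂, hcA, hcB, hiff⟩ := u.exists_pi_of_conv (Conv.refl _)
  have hy₂ : lowEl k j A₂ y := (lowEl_iff_of_lt hj).2 (el_conv hcA hy)
  exact el_conv (hcB.symm.subst y) (el_iff.2 ⟨hB₂ y hy₂, (hiff f).1 m y hy₂⟩)

theorem U.of_el_star {j k : ℕ} {A : Tm} (hjk : j ≤ k) (h : el j .star A) :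
    Nonempty (U (lowEl k) j A) :=
  (el_star_iff.1 h).some.congr_param fun _ _ _ hi => lowEl_iff_lowEl hi hjk

theorem el_star_pi {k j : ℕ} {A B : Tm} (hjk : j < k) (hA : el j .star A)
    (hB : ∀ y, el j A y → el k .star (Tm.subst 0 y B)) : el k .star (.pi j A B) :=
  el_star_iff.2 ⟨.pi hjk (U.of_el_star hjk.le hA).some fun y hy =>
    (el_star_iff.1 (hB y ((lowEl_iff_of_lt hjk).1 hy))).some⟩

theorem el_lam {k j : ℕ} {A B b : Tm} (hjk : j < k) (hA : el j .star A)
    (hb : ∀ y, el j A y → el k (Tm.subst 0 y B) (Tm.subst 0 y b)) : el k (.pi j A B) (.lam b) := by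
  have hb' (y) (hy : lowEl k j A y) := el_iff.1 (hb y ((lowEl_iff_of_lt hjk).1 hy))
  refine el_iff.2 ⟨.pi hjk (U.of_el_star hjk.le hA).some fun y hy => (hb' y hy).choose,
    fun y hy => ?_⟩
  exact U.elU_of_par _ (.beta (Par.refl b) (Par.refl y)) (hb' y hy).choose_spec

def scons (y : Tm) (σ : ℕ → Tm) : ℕ → Tm
  | 0 => y
  | n + 1 => σ n

def upn : ℕ → (ℕ → Tm) → ℕ → Tm
  | 0, σ => σ
  | n + 1, σ => up (upn n σ)

theorem upn_apply (n : ℕ) (σ : ℕ → Tm) (x : ℕ) :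
    upn n σ x = if x < n then .var x else Tm.shift n 0 (σ (x - n)) := by
  induction n generalizing x with
  | zero => simp [upn, Tm.shift_zero]
  | succ n ih =>
      cases x with
      | zero => simp [upn, up]
      | succ m =>
          change Tm.shift 1 0 (upn n σ m) = _
          rw [ih]
          split
          · rw [if_pos (by omega)]; simp [Tm.shift]
          · rw [if_neg (by omega), Tm.shift_shift _ le_rfl (by omega), Nat.add_sub_add_right, add_comm]

theorem applySubst_upn_shift : ∀ (t : Tm) (n c : ℕ) (σ : ℕ → Tm),
    applySubst (upn (n + c) σ) (Tm.shift n c t) = Tm.shift n c (applySubst (upn c σ) t)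
  | .star, _, _, _ | .bot, _, _, _ => rfl
  | .var x, n, c, σ => by
      simp only [Tm.shift]
      split
      · change upn (n + c) σ x = Tm.shift n c (upn c σ x)
        rw [upn_apply, if_pos (by omega), upn_apply, if_pos ‹x < c›]
        simp only [Tm.shift]
        rw [if_pos ‹x < c›]
      · change upn (n + c) σ (x + n) = Tm.shift n c (upn c σ x)
        rw [upn_apply, if_neg (by omega), upn_apply, if_neg ‹¬ x < c›,
          Tm.shift_shift (σ (x - c)) (Nat.zero_le c) (by omega : c ≤ 0 + c),
          show x + n - (n + c) = x - c by omega, add_comm n c]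
  | .pi j A B, n, c, σ => by
      simp only [Tm.shift, applySubst]
      rw [applySubst_upn_shift A n c σ]
      exact congrArg _ (applySubst_upn_shift B n (c + 1) σ)
  | .lam b, n, c, σ => by
      simp only [Tm.shift, applySubst]
      exact congrArg _ (applySubst_upn_shift b n (c + 1) σ)
  | .app b a, n, c, σ => by
      simp only [Tm.shift, applySubst, applySubst_upn_shift b n c σ, applySubst_upn_shift a n c σ]
  | .absurd b, n, c, σ => by
      simp only [Tm.shift, applySubst, applySubst_upn_shift b n c σ]

theorem subst_applySubst_upn_up : ∀ (t : Tm) (n : ℕ) (σ : ℕ → Tm) (y : Tm),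
    Tm.subst n y (applySubst (upn n (up σ)) t) = applySubst (upn n (scons y σ)) t
  | .star, _, _, _ | .bot, _, _, _ => rfl
  | .var x, n, σ, y => by
      change Tm.subst n y (upn n (up σ) x) = upn n (scons y σ) x
      rcases Nat.lt_trichotomy x n with h | rfl | h
      · rw [upn_apply, if_pos h, upn_apply, if_pos h]
        simp only [Tm.subst]
        rw [if_pos h]
      · rw [upn_apply, if_neg (lt_irrefl x), upn_apply, if_neg (lt_irrefl x), Nat.sub_self]
        change Tm.subst x y (Tm.shift x 0 (.var 0)) = Tm.shift x 0 y
        simp [Tm.shift, Tm.subst]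
      · rw [upn_apply, if_neg (by omega), upn_apply, if_neg (by omega),
          show x - n = (x - n - 1) + 1 by omega]
        change Tm.subst n y (Tm.shift n 0 (Tm.shift 1 0 (σ (x - n - 1)))) = _
        rw [Tm.shift_shift _ le_rfl (by omega),
          Tm.subst_shift_cancel _ y (Nat.zero_le n) (by omega), Nat.add_sub_cancel_left]
        rfl
  | .pi j A B, n, σ, y => by
      simp only [applySubst, Tm.subst]
      rw [subst_applySubst_upn_up A n σ y]
      exact congrArg _ (subst_applySubst_upn_up B (n + 1) σ y)
  | .lam b, n, σ, y => by
      simp only [applySubst, Tm.subst]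
      exact congrArg _ (subst_applySubst_upn_up b (n + 1) σ y)
  | .app b a, n, σ, y => by
      simp only [applySubst, Tm.subst,
        subst_applySubst_upn_up b n σ y, subst_applySubst_upn_up a n σ y]
  | .absurd b, n, σ, y => by
      simp only [applySubst, Tm.subst, subst_applySubst_upn_up b n σ y]

theorem subst_applySubst_up (t : Tm) (σ : ℕ → Tm) (y : Tm) :
    Tm.subst 0 y (applySubst (up σ) t) = applySubst (scons y σ) t :=
  subst_applySubst_upn_up t 0 σ y

theorem applySubst_upn_subst : ∀ (t : Tm) (n : ℕ) (σ : ℕ → Tm) (a : Tm),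
    applySubst (upn n σ) (Tm.subst n a t) = applySubst (upn n (scons (applySubst σ a) σ)) t
  | .star, _, _, _ | .bot, _, _, _ => rfl
  | .var x, n, σ, a => by
      simp only [Tm.subst]
      rcases Nat.lt_trichotomy x n with h | rfl | h
      · rw [if_pos h]
        change upn n σ x = upn n (scons (applySubst σ a) σ) x
        rw [upn_apply, if_pos h, upn_apply, if_pos h]
      · rw [if_neg (lt_irrefl x), if_pos rfl]
        change applySubst (upn x σ) (Tm.shift x 0 a) = upn x (scons (applySubst σ a) σ) x
        rw [upn_apply, if_neg (lt_irrefl x), Nat.sub_self]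
        exact applySubst_upn_shift a x 0 σ
      · rw [if_neg (by omega), if_neg (by omega)]
        change upn n σ (x - 1) = upn n (scons (applySubst σ a) σ) x
        rw [upn_apply, if_neg (by omega), upn_apply, if_neg (by omega),
          show x - n = (x - n - 1) + 1 by omega, show x - 1 - n = x - n - 1 by omega]
        rfl
  | .pi j A B, n, σ, a => by
      simp only [applySubst, Tm.subst]
      rw [applySubst_upn_subst A n σ a]
      exact congrArg _ (applySubst_upn_subst B (n + 1) σ a)
  | .lam b, n, σ, a => by
      simp only [applySubst, Tm.subst]
      exact congrArg _ (applySubst_upn_subst b (n + 1) σ a)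
  | .app b a', n, σ, a => by
      simp only [applySubst, Tm.subst, applySubst_upn_subst b n σ a, applySubst_upn_subst a' n σ a]
  | .absurd b, n, σ, a => by
      simp only [applySubst, Tm.subst, applySubst_upn_subst b n σ a]

theorem applySubst_subst (t : Tm) (σ : ℕ → Tm) (a : Tm) :
    applySubst σ (Tm.subst 0 a t) = applySubst (scons (applySubst σ a) σ) t :=
  applySubst_upn_subst t 0 σ a

theorem up_shiftIdx (σ : ℕ → Tm) (n c i : ℕ) :
    up σ (if i < c + 1 then i else i + n) = up (fun i => σ (if i < c then i else i + n)) i := by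
  cases i with
  | zero => simp [up]
  | succ m =>
      by_cases h : m < c
      · rw [if_pos (by omega)]; simp [up, h]
      · rw [if_neg (by omega), show m + 1 + n = m + n + 1 by omega]; simp [up, h]

theorem applySubst_shift : ∀ (t : Tm) (n c : ℕ) (σ : ℕ → Tm),
    applySubst σ (Tm.shift n c t) = applySubst (fun i => σ (if i < c then i else i + n)) t
  | .star, _, _, _ | .bot, _, _, _ => rfl
  | .var x, n, c, σ => by simp only [Tm.shift]; split <;> simp [applySubst, *]
  | .pi j A B, n, c, σ => by
      simp only [Tm.shift, applySubst, applySubst_shift A, applySubst_shift B]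
      exact congrArg _ (congrArg (applySubst · B) (funext (up_shiftIdx σ n c)))
  | .lam b, n, c, σ => by
      simp only [Tm.shift, applySubst, applySubst_shift b]
      exact congrArg _ (congrArg (applySubst · b) (funext (up_shiftIdx σ n c)))
  | .app b a, n, c, σ => by
      simp only [Tm.shift, applySubst, applySubst_shift b, applySubst_shift a]
  | .absurd b, n, c, σ => by
      simp only [Tm.shift, applySubst, applySubst_shift b]

theorem deq_applySubst {a b : Tm} (h : DEq a b) (σ : ℕ → Tm) :
    DEq (applySubst σ a) (applySubst σ b) := by
  induction h generalizing σ with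
  | refl a => exact .refl _
  | sym _ ih => exact .sym (ih σ)
  | trans _ _ ih₁ ih₂ => exact .trans (ih₁ σ) (ih₂ σ)
  | pi _ _ ihA ihB => exact .pi (ihA σ) (ihB (up σ))
  | lam _ ih => exact .lam (ih (up σ))
  | app _ _ ihb iha => exact .app (ihb σ) (iha σ)
  | absurd _ ih => exact .absurd (ih σ)
  | beta b a =>
      have h := DEq.beta (applySubst (up σ) b) (applySubst σ a)
      rwa [subst_applySubst_up, ← applySubst_subst] at h

theorem substInterp.lookup {Γ : Ctx} {σ : ℕ → Tm} {x j : ℕ} {A : Tm} (hσ : substInterp Γ σ)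
    (hx : Γ[x]? = some (j, A)) : el j (applySubst (fun i => σ (i + (x + 1))) A) (σ x) := by
  induction Γ generalizing σ x with
  | nil => simp at hx
  | cons entry Γ ih =>
      cases x with
      | zero =>
          obtain rfl : entry = (j, A) := by simpa using hx
          exact hσ.2
      | succ x => exact ih (x := x) hσ.1 (by simpa using hx)

theorem substInterp.cons {Γ : Ctx} {σ : ℕ → Tm} {j : ℕ} {A y : Tm} (hσ : substInterp Γ σ)
    (hy : el j (applySubst σ A) y) : substInterp ((j, A) :: Γ) (scons y σ) :=
  ⟨hσ, hy⟩

/-- Semantic typing `Γ ⊨ a :^k A`. -/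
def SemTyping (Γ : Ctx) (a : Tm) (k : ℕ) (A : Tm) : Prop :=
  ∀ σ, substInterp Γ σ → el k (applySubst σ A) (applySubst σ a)

namespace SemTyping

variable {Γ : Ctx} {k : ℕ}

theorem star : SemTyping Γ .star k .star := fun _ _ => el_star_iff.2 ⟨.star⟩

theorem bot : SemTyping Γ .bot k .star := fun _ _ => el_star_iff.2 ⟨.bot⟩

theorem var {x j : ℕ} {A : Tm} (hx : Γ[x]? = some (j, A)) (hjk : j ≤ k) :
    SemTyping Γ (.var x) k (Tm.shift (x + 1) 0 A) := fun σ hσ => by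
  simpa [applySubst_shift, applySubst] using el_mono hjk (hσ.lookup hx)

theorem pi {j : ℕ} {A B : Tm} (hjk : j < k) (hA : SemTyping Γ A j .star)
    (hB : SemTyping ((j, A) :: Γ) B k .star) : SemTyping Γ (.pi j A B) k .star := fun σ hσ =>
  el_star_pi hjk (hA σ hσ) fun y hy => by
    rw [subst_applySubst_up]
    exact hB _ (hσ.cons hy)

theorem lam {j : ℕ} {A B b : Tm} (hjk : j < k) (hA : SemTyping Γ A j .star)
    (hb : SemTyping ((j, A) :: Γ) b k B) : SemTyping Γ (.lam b) k (.pi j A B) := fun σ hσ =>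
  el_lam hjk (hA σ hσ) fun y hy => by
    rw [subst_applySubst_up, subst_applySubst_up]
    exact hb _ (hσ.cons hy)

theorem app {j : ℕ} {A B b a : Tm} (hb : SemTyping Γ b k (.pi j A B)) (ha : SemTyping Γ a j A) :
    SemTyping Γ (.app b a) k (Tm.subst 0 a B) := fun σ hσ => by
  have h := el_app (hb σ hσ) (ha σ hσ)
  rwa [subst_applySubst_up, ← applySubst_subst] at h

theorem absurd {b A : Tm} (hb : SemTyping Γ b k .bot) : SemTyping Γ (.absurd b) k A :=
  fun σ hσ => (not_el_bot (hb σ hσ)).elim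

theorem conv {a A B : Tm} (ha : SemTyping Γ a k A) (hAB : DEq A B) : SemTyping Γ a k B :=
  fun σ hσ => el_conv (deq_applySubst hAB σ).conv (ha σ hσ)

end SemTyping

theorem Typing.sound {Γ : Ctx} {a : Tm} {k : ℕ} {A : Tm} (h : Typing Γ a k A) :
    SemTyping Γ a k A :=
  Typing.rec (motive_1 := fun _ _ => True) (motive_2 := fun Γ a k A _ => SemTyping Γ a k A)
    trivial (fun _ _ _ _ => trivial)
    (fun _ _ => .star)
    (fun _ hx hjk _ => .var hx hjk)
    (fun hjk _ _ hA hB => .pi hjk hA hB)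
    (fun hjk _ _ hA hb => .lam hjk hA hb)
    (fun _ _ hb ha => .app hb ha)
    (fun _ _ => .bot)
    (fun _ _ hb _ => .absurd hb)
    (fun _ hAB _ ha _ => .conv ha hAB)
    h

/-- **Soundness (the fundamental theorem) for subStraTT**: if `⟦Γ⟧`,
`σ ∈ ⟦Γ⟧`, and `Γ ⊢ a :^k A`, then `⟦A{σ}⟧ₖ` and `a{σ} ∈ ⟦A{σ}⟧ₖ`. -/
theorem substratt_soundness {Γ : Ctx} {σ : ℕ → Tm} {a A : Tm} {k : ℕ}
    (hΓ : ctxInterp Γ) (hσ : substInterp Γ σ) (h : Typing Γ a k A) :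
    interpTy k (applySubst σ A) ∧ el k (applySubst σ A) (applySubst σ a) :=
  have ha := h.sound σ hσ
  ⟨interpTy_of_el ha, ha⟩
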